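/- In the setup of the main theorem, let G_x be the graph with vertex set V_x = {γ ∈ Γ : ∃j ∈ {1,…,m}, γ⁻¹·x ∈ supp f_j} and edges between distinct γ, λ ∈ V_x whenever there exist i,j ∈ {1,…,m} and k,ℓ ∈ {0,…,n} with ∂_k(γ·σ_i) = ∂_ℓ(λ·σ_j), γ⁻¹·x ∈ supp f_i, and λ⁻¹·x ∈ supp f_j. Then for every edge {γ,λ} of G_x, one has γ⁻¹·x ∼_R λ⁻¹·x, where R is the relation generated by the partial translations φ_j : supp f_j → γ_j⁻¹·supp f_j. -/

import Mathlib

open MeasureTheory ENNReal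

namespace Paper

/-- A partial measurable isomorphism whose graph is contained in the relation `r`
(an element of the pseudo-full group `⟦r⟧`). -/
structure PartialIso (X : Type*) [MeasurableSpace X] (r : X → X → Prop) where
  dom : Set X
  toFun : X → X
  dom_meas : MeasurableSet dom
  meas : Measurable toFun
  injOn : Set.InjOn toFun dom
  image_meas : MeasurableSet (toFun '' dom)
  mem_rel : ∀ x ∈ dom, r x (toFun x)

/-- A (countable) family of partial isomorphisms is a graphing of `r` if the equivalence
relation it generates is exactly `r`. -/
def IsGraphing {X : Type*} [MeasurableSpace X] {r : X → X → Prop}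
    (Φ : ℕ → PartialIso X r) : Prop :=
  ∀ x y, r x y ↔
    Relation.EqvGen (fun a b => ∃ i, a ∈ (Φ i).dom ∧ b = (Φ i).toFun a) x y

/-- The cost of a relation `r` on a measure space: the infimum over graphings of the
sum of the measures of the domains. -/
noncomputable def cost {X : Type*} [MeasurableSpace X] (μ : Measure X)
    (r : X → X → Prop) : ℝ≥0∞ :=
  ⨅ Φ : {Φ : ℕ → PartialIso X r // IsGraphing Φ}, ∑' i, μ ((Φ.1 i).dom)

/-- A standard equivalence relation: measurable, countable classes, and all measurable
automorphisms preserving the classes preserve the measure. -/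
structure IsStdEqRel {X : Type*} [MeasurableSpace X] (μ : Measure X)
    (r : X → X → Prop) : Prop where
  equivalence : Equivalence r
  measurableSet_rel : MeasurableSet {p : X × X | r p.1 p.2}
  countable_classes : ∀ x, {y | r x y}.Countable
  fullGroup_measurePreserving :
    ∀ f : X ≃ᵐ X, (∀ x y, r x y → r (f x) (f y)) → MeasurePreserving f μ μ

/-- A set is invariant under a relation. -/
def IsInvariant {X : Type*} (r : X → X → Prop) (A : Set X) : Prop :=
  ∀ x ∈ A, ∀ y, r x y → y ∈ A

/-- A complete section: every orbit meets the set. -/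
def IsCompleteSection {X : Type*} (r : X → X → Prop) (A : Set X) : Prop :=
  ∀ x : X, ∃ y ∈ A, r x y

/-- A relation is aperiodic if almost every orbit is infinite. -/
def IsAperiodic {X : Type*} [MeasurableSpace X] (μ : Measure X)
    (r : X → X → Prop) : Prop :=
  ∀ᵐ x ∂μ, {y | r x y}.Infinite

/-- A relation is ergodic if every invariant measurable set is null or conull. -/
def IsErgodicRel {X : Type*} [MeasurableSpace X] (μ : Measure X)
    (r : X → X → Prop) : Prop :=
  ∀ A : Set X, MeasurableSet A → IsInvariant r A → μ A = 0 ∨ μ Aᶜ = 0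

/-- `R ⊂ S` is a translation finite extension: finitely many full-group elements of `S`
suffice to cover almost every `S`-orbit by translates of `R`-orbits. -/
def IsTransFinExt {X : Type*} [MeasurableSpace X] (μ : Measure X)
    (r s : X → X → Prop) : Prop :=
  (∀ x y, r x y → s x y) ∧
  ∃ F : Finset (X ≃ᵐ X), (∀ f ∈ F, ∀ x, s x (f x)) ∧
    ∀ᵐ x ∂μ, ∀ y, s x y ↔ ∃ f ∈ F, ∃ g ∈ F, ∃ z, r (g.symm x) z ∧ y = f z


open MeasureTheory ENNReal
open scoped Classical

namespace SimplexCategory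

open _root_.SimplexCategory CategoryTheory

/-- The topological simplex associated to `x : SimplexCategory` (the definition removed
from Mathlib, restated with its old meaning). -/
def toTopObj (x : _root_.SimplexCategory) : Set (Fin (x.len + 1) → NNReal) :=
  { f : Fin (x.len + 1) → NNReal | ∑ i, f i = 1 }

/-- A morphism in `SimplexCategory` induces a map on the associated topological spaces. -/
def toTopMap {x y : _root_.SimplexCategory} (f : x ⟶ y) (g : toTopObj x) : toTopObj y :=
  ⟨fun i => ∑ j ∈ Finset.univ.filter (f.toOrderHom · = i), g.1 j, by
    simp only [toTopObj, Set.mem_ofPred_eq]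
    rw [← Finset.sum_biUnion]
    · have hg : ∑ i : Fin (x.len + 1), g.1 i = 1 := g.2
      convert hg
      simp [Finset.eq_univ_iff_forall]
    · convert Set.pairwiseDisjoint_filter _ _ _⟩

theorem continuous_toTopMap {x y : _root_.SimplexCategory} (f : x ⟶ y) :
    Continuous (toTopMap f) := by
  refine Continuous.subtype_mk (continuous_pi fun i => ?_) _
  exact continuous_finsetSum _ (fun j _ => (continuous_apply _).comp continuous_subtype_val)

end SimplexCategory

/-- Singular `n`-simplices in a space `N`. -/
abbrev SSimplex (n : ℕ) (N : Type*) [TopologicalSpace N] : Type _ :=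
  C(SimplexCategory.toTopObj (SimplexCategory.mk n), N)

/-- The `k`-th face of a singular `(n+1)`-simplex. -/
noncomputable def faceMap {N : Type*} [TopologicalSpace N] {n : ℕ} (k : Fin (n + 2))
    (σ : SSimplex (n + 1) N) : SSimplex n N :=
  σ.comp ⟨SimplexCategory.toTopMap (SimplexCategory.δ k),
    SimplexCategory.continuous_toTopMap _⟩

/-- The `i`-th vertex of the topological standard simplex. -/
noncomputable def vertex {n : ℕ} (i : Fin (n + 1)) :
    SimplexCategory.toTopObj (SimplexCategory.mk n) :=
  ⟨fun j => if j = i then 1 else 0, by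
    simp only [SimplexCategory.toTopObj, Set.mem_setOf_eq]
    exact (Finset.sum_eq_single_of_mem i (Finset.mem_univ i) fun b _ hb => if_neg hb).trans (if_pos rfl)⟩

/-- The coefficient of `τ` in the boundary of the chain with coefficients `c`. -/
noncomputable def bdryCoeff {N : Type*} [TopologicalSpace N] {Z : Type*} [CommRing Z]
    {n : ℕ} (c : SSimplex (n + 1) N → Z) (τ : SSimplex n N) : Z :=
  ∑ᶠ σ : SSimplex (n + 1) N,
    ∑ k : Fin (n + 2), if faceMap k σ = τ then ((-1 : ℤ) ^ (k : ℕ)) • c σ else 0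

/-- Locally finite singular chains with coefficients in `Z`. -/
structure LFChain (n : ℕ) (N : Type*) [TopologicalSpace N] (Z : Type*) [CommRing Z] where
  coeff : SSimplex n N → Z
  locFin : ∀ K : Set N, IsCompact K →
    {σ : SSimplex n N | coeff σ ≠ 0 ∧ (Set.range σ ∩ K).Nonempty}.Finite

/-- A locally finite chain is a cycle if its boundary vanishes (in degree 0 there is
no condition). -/
def IsLFCycle {N : Type*} [TopologicalSpace N] {Z : Type*} [CommRing Z] :
    ∀ {n : ℕ}, LFChain n N Z → Prop
  | 0, _ => True
  | _ + 1, c => ∀ τ, bdryCoeff c.coeff τ = 0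

/-- A coefficient function is a locally finite boundary. -/
def IsLFBoundary {N : Type*} [TopologicalSpace N] {Z : Type*} [CommRing Z] {n : ℕ}
    (f : SSimplex n N → Z) : Prop :=
  ∃ b : LFChain (n + 1) N Z, ∀ τ, f τ = bdryCoeff b.coeff τ

/-- Restriction of a locally finite chain at a point `x`: keep only the simplices whose
image contains `x`; this is a finite chain. -/
noncomputable def restr {N : Type*} [TopologicalSpace N] {Z : Type*} [CommRing Z]
    {n : ℕ} (x : N) (c : LFChain n N Z) : SSimplex n N →₀ Z :=
  Finsupp.onFinset (c.locFin {x} isCompact_singleton).toFinset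
    (fun σ => if x ∈ Set.range σ then c.coeff σ else 0)
    (by
      intro σ h
      rw [Set.Finite.mem_toFinset]
      by_cases hx : x ∈ Set.range σ
      · simp only [if_pos hx] at h
        exact ⟨h, ⟨x, hx, rfl⟩⟩
      · simp only [if_neg hx, ne_eq, not_true_eq_false] at h)

/-- Restriction of a finite chain at a point `x`. -/
noncomputable def finRestr {N : Type*} [TopologicalSpace N] {Z : Type*} [CommRing Z]
    {n : ℕ} (x : N) (w : SSimplex n N →₀ Z) : SSimplex n N →₀ Z :=
  Finsupp.onFinset w.support
    (fun σ => if x ∈ Set.range σ then w σ else 0)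
    (by
      intro σ h
      by_cases hx : x ∈ Set.range σ
      · simp only [if_pos hx] at h
        exact Finsupp.mem_support_iff.mpr h
      · simp only [if_neg hx, ne_eq, not_true_eq_false] at h)

/-- A finite chain is a relative cycle relative to `N \ {x}`: its boundary is supported
on simplices avoiding `x`. -/
def IsRelCycle {N : Type*} [TopologicalSpace N] {Z : Type*} [CommRing Z] :
    ∀ {n : ℕ}, N → (SSimplex n N →₀ Z) → Prop
  | 0, _, _ => True
  | m + 1, x, c => ∀ τ : SSimplex m N, x ∈ Set.range (⇑τ) → bdryCoeff (⇑c) τ = 0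

/-- Two finite chains are homologous relative to `N \ {x}`. -/
def RelHomologous {N : Type*} [TopologicalSpace N] {Z : Type*} [CommRing Z] {n : ℕ}
    (x : N) (c c' : SSimplex n N →₀ Z) : Prop :=
  ∃ b : SSimplex (n + 1) N →₀ Z, ∀ τ : SSimplex n N, x ∈ Set.range (⇑τ) → c τ - c' τ = bdryCoeff (⇑b) τ

/-- A relative cycle `c` generates the local homology `H_n(N, N \ {x}; Z) ≅ Z`. -/
def IsLocalGenerator {N : Type*} [TopologicalSpace N] {Z : Type*} [CommRing Z] {n : ℕ}
    (x : N) (c : SSimplex n N →₀ Z) : Prop :=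
  IsRelCycle x c ∧
    ∀ d : SSimplex n N →₀ Z, IsRelCycle x d → ∃! a : Z, RelHomologous x d (a • c)

/-- A locally finite fundamental cycle: a locally finite cycle whose restriction at every
point generates the local homology. This encodes (a representative of) the locally finite
fundamental class of an oriented manifold. -/
def IsLFFundamentalClass {N : Type*} [TopologicalSpace N] {Z : Type*} [CommRing Z]
    {n : ℕ} (c : LFChain n N Z) : Prop :=
  IsLFCycle c ∧ ∀ x : N, IsLocalGenerator x (restr x c)

/-- A finite chain is a cycle. -/
def IsFinCycle {N : Type*} [TopologicalSpace N] {Z : Type*} [CommRing Z] :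
    ∀ {n : ℕ}, (SSimplex n N →₀ Z) → Prop
  | 0, _ => True
  | _ + 1, w => ∀ τ, bdryCoeff (⇑w) τ = 0

/-- A fundamental cycle of a closed manifold: a finite cycle whose restriction at every
point generates the local homology. -/
def IsFinFundCycle {N : Type*} [TopologicalSpace N] {Z : Type*} [CommRing Z] {n : ℕ}
    (w : SSimplex n N →₀ Z) : Prop :=
  IsFinCycle w ∧ ∀ x : N, IsLocalGenerator x (finRestr x w)


open MeasureTheory ENNReal
open scoped Classical

/-- A parametrised chain: an element of `L^∞(X, Z) ⊗_{ZΓ} C_n(M̃; Z)`, encoded as a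
`Γ`-equivariant family of bounded measurable `Z`-valued coefficient functions indexed by
the singular simplices of the universal cover, supported on finitely many `Γ`-orbits. -/
structure ParamChain (n : ℕ) (Γ : Type*) [Group Γ] (Mt : Type*) [TopologicalSpace Mt]
    [MulAction Γ Mt] [ContinuousConstSMul Γ Mt]
    (X : Type*) [MeasurableSpace X] [MulAction Γ X] (Z : Type*) [CommRing Z] where
  coeff : SSimplex n Mt → X → Z
  measurable_level : ∀ σ z, MeasurableSet {x | coeff σ x = z}
  finiteRange : ∀ σ, (Set.range (coeff σ)).Finite
  equivariant : ∀ (γ : Γ) σ x, coeff (γ • σ) x = coeff σ (γ⁻¹ • x)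
  orbitFinite : ∃ s : Finset (SSimplex n Mt),
    ∀ σ, coeff σ ≠ 0 → ∃ τ ∈ s, ∃ γ : Γ, σ = γ • τ

variable {n : ℕ} {Γ : Type*} [Group Γ] {Mt : Type*} [TopologicalSpace Mt]
  [MulAction Γ Mt] [ContinuousConstSMul Γ Mt]
  {X : Type*} [MeasurableSpace X] [MulAction Γ X] {Z : Type*} [CommRing Z]

/-- The coefficient of the boundary of a parametrised chain. -/
noncomputable def pbdryCoeff (b : ParamChain (n + 1) Γ Mt X Z)
    (σ : SSimplex n Mt) (x : X) : Z :=
  ∑ᶠ τ : SSimplex (n + 1) Mt,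
    ∑ k : Fin (n + 2), if faceMap k τ = σ then ((-1 : ℤ) ^ (k : ℕ)) • b.coeff τ x else 0

/-- A parametrised chain is a cycle. -/
def IsParamCycle : ∀ {n : ℕ}, ParamChain n Γ Mt X Z → Prop
  | 0, _ => True
  | _ + 1, c => ∀ σ x, pbdryCoeff c σ x = 0

/-- Two parametrised chains are homologous. -/
def ParamHomologous (c c' : ParamChain n Γ Mt X Z) : Prop :=
  ∃ b : ParamChain (n + 1) Γ Mt X Z, ∀ σ x, c.coeff σ x - c'.coeff σ x = pbdryCoeff b σ x

/-- A parametrised fundamental cycle: a parametrised cycle homologous to the image of a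
`Z`-fundamental cycle of `M` under the canonical inclusion. -/
def IsParamFundCycle {M : Type*} [TopologicalSpace M] (p : C(Mt, M))
    (c : ParamChain n Γ Mt X Z) : Prop :=
  IsParamCycle c ∧
    ∃ w : SSimplex n M →₀ Z, IsFinFundCycle w ∧
      ∃ c₀ : ParamChain n Γ Mt X Z,
        (∀ σ x, c₀.coeff σ x = w (p.comp σ)) ∧ ParamHomologous c c₀

/-- The `ℓ¹`-norm (in reduced form) of a parametrised integral chain: the sum over the
`Γ`-orbits of simplices of the integral of the absolute value of the coefficient function. -/
noncomputable def paramNorm (μ : Measure X) (c : ParamChain n Γ Mt X ℤ) : ℝ≥0∞ :=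
  ∑' o : Quotient (MulAction.orbitRel Γ (SSimplex n Mt)),
    sSup {r : ℝ≥0∞ | ∃ σ : SSimplex n Mt,
      Quotient.mk (MulAction.orbitRel Γ (SSimplex n Mt)) σ = o ∧
      r = ∫⁻ x, ((c.coeff σ x).natAbs : ℝ≥0∞) ∂μ}

/-- The weightless norm of a parametrised chain: the sum over the `Γ`-orbits of simplices
of the measure of the support of the coefficient function. -/
noncomputable def weightlessNorm (μ : Measure X) (c : ParamChain n Γ Mt X Z) : ℝ≥0∞ :=
  ∑' o : Quotient (MulAction.orbitRel Γ (SSimplex n Mt)),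
    sSup {r : ℝ≥0∞ | ∃ σ : SSimplex n Mt,
      Quotient.mk (MulAction.orbitRel Γ (SSimplex n Mt)) σ = o ∧
      r = μ {x | c.coeff σ x ≠ 0}}

/-- The `α`-parametrised simplicial volume: the infimal `ℓ¹`-norm of parametrised
fundamental cycles. -/
noncomputable def paramSV (n : ℕ) (Γ : Type*) [Group Γ] (Mt : Type*) [TopologicalSpace Mt]
    [MulAction Γ Mt] [ContinuousConstSMul Γ Mt] (M : Type*) [TopologicalSpace M]
    (p : C(Mt, M)) (X : Type*) [MeasurableSpace X] [MulAction Γ X]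
    (μ : Measure X) : ℝ≥0∞ :=
  ⨅ c : {c : ParamChain n Γ Mt X ℤ // IsParamFundCycle p c}, paramNorm μ c.1

/-- The weightless `(α; Z)`-parametrised simplicial volume. -/
noncomputable def weightlessSV (n : ℕ) (Γ : Type*) [Group Γ] (Mt : Type*)
    [TopologicalSpace Mt] [MulAction Γ Mt] [ContinuousConstSMul Γ Mt] (M : Type*)
    [TopologicalSpace M] (p : C(Mt, M)) (X : Type*) [MeasurableSpace X] [MulAction Γ X]
    (μ : Measure X) (Z : Type*) [CommRing Z] : ℝ≥0∞ :=
  ⨅ c : {c : ParamChain n Γ Mt X Z // IsParamFundCycle p c}, weightlessNorm μ c.1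

/-- A standard `Γ`-space: a standard Borel probability space with a measurable
measure-preserving `Γ`-action. -/
structure StdGammaSpace (Γ : Type*) [Group Γ] where
  carrier : Type
  mX : MeasurableSpace carrier
  std : @StandardBorelSpace carrier mX
  act : MulAction Γ carrier
  μ : @Measure carrier mX
  prob : @IsProbabilityMeasure carrier mX μ
  pres : ∀ γ : Γ, @MeasurePreserving carrier carrier mX mX
    (fun x => @SMul.smul Γ carrier act.toSMul γ x) μ μ

/-- The orbit relation of a standard `Γ`-space. -/
def StdGammaSpace.orbitRel {Γ : Type*} [Group Γ] (α : StdGammaSpace Γ) :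
    α.carrier → α.carrier → Prop :=
  fun x y => ∃ γ : Γ, y = @SMul.smul Γ α.carrier α.act.toSMul γ x

/-- The cost of a standard `Γ`-space. -/
noncomputable def StdGammaSpace.cost {Γ : Type*} [Group Γ] (α : StdGammaSpace Γ) :
    ℝ≥0∞ := by
  letI := α.mX
  exact Paper.cost α.μ α.orbitRel

/-- The cost of a group: the infimum of the costs of its standard `Γ`-spaces. -/
noncomputable def groupCost (Γ : Type*) [Group Γ] : ℝ≥0∞ :=
  ⨅ α : StdGammaSpace Γ, α.cost

/-- The parametrised simplicial volume of a standard `Γ`-space. -/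
noncomputable def StdGammaSpace.paramSV {Γ : Type*} [Group Γ] (α : StdGammaSpace Γ)
    (n : ℕ) (Mt : Type*) [TopologicalSpace Mt] [MulAction Γ Mt]
    [ContinuousConstSMul Γ Mt] (M : Type*) [TopologicalSpace M] (p : C(Mt, M)) :
    ℝ≥0∞ := by
  letI := α.mX
  letI := α.act
  exact Paper.paramSV n Γ Mt M p α.carrier α.μ

/-- The integral foliated simplicial volume: the infimum of the parametrised simplicial
volumes over all standard `Γ`-spaces. -/
noncomputable def ifsv (n : ℕ) (Γ : Type*) [Group Γ] (Mt : Type*) [TopologicalSpace Mt]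
    [MulAction Γ Mt] [ContinuousConstSMul Γ Mt] (M : Type*) [TopologicalSpace M]
    (p : C(Mt, M)) : ℝ≥0∞ :=
  ⨅ α : StdGammaSpace Γ, α.paramSV n Mt M p


open MeasureTheory ENNReal
open scoped Pointwise

/-!
The first vertex of the `k`-th face of `γ • σ i` is `γ • σ i (v₁) ∈ (γ * γⱼ i) • D` when `k = 0`
and `γ • σ i (v₀) ∈ γ • D` otherwise. Matching faces share this vertex, and distinct translates
of `D` are disjoint, so `γ * s = ℓ * t` with `s ∈ {1, γⱼ i}` and `t ∈ {1, γⱼ j}` read off from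
`k` and `l`, which settles all four cases at once. Finally `(γ * γⱼ i)⁻¹ • x` is the
image of `γ⁻¹ • x` under the partial translation `φ_i`, defined there since `f i (γ⁻¹ • x) ≠ 0`.
-/

theorem toTopMap_vertex {n m : ℕ} (g : SimplexCategory.mk n ⟶ SimplexCategory.mk m)
    (i : Fin (n + 1)) :
    SimplexCategory.toTopMap g (vertex i) = vertex (g.toOrderHom i) := by
  ext a
  simp only [SimplexCategory.toTopMap, vertex, Finset.sum_ite_eq', Finset.mem_filter,
    Finset.mem_univ, true_and]
  congr 2
  exact propext eq_comm

theorem faceMap_apply_vertex {N : Type*} [TopologicalSpace N] {n : ℕ} (k : Fin (n + 2))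
    (σ : SSimplex (n + 1) N) (i : Fin (n + 1)) :
    faceMap k σ (vertex i) = σ (vertex (k.succAbove i)) :=
  congrArg σ (toTopMap_vertex _ i)

theorem faceMap_smul_apply_vertex_zero_mem {Γ Mt : Type*} [Group Γ] [TopologicalSpace Mt]
    [MulAction Γ Mt] [ContinuousConstSMul Γ Mt] {n : ℕ} {σ : SSimplex (n + 1) Mt} {D : Set Mt}
    {g : Γ} (h₀ : σ (vertex 0) ∈ D) (h₁ : σ (vertex 1) ∈ g • D) (γ : Γ) (k : Fin (n + 2)) :
    faceMap k (γ • σ) (vertex 0) ∈ (γ * if k = 0 then g else 1) • D := by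
  rw [faceMap_apply_vertex, ContinuousMap.smul_apply]
  split_ifs with hk
  · rw [hk, Fin.succAbove_zero_apply, Fin.succ_zero_eq_one, mul_smul]
    exact Set.smul_mem_smul_set h₁
  · rw [Fin.succAbove_ne_zero_zero hk, mul_one]
    exact Set.smul_mem_smul_set h₀

theorem eqvGen_inv_smul_mul_inv_smul {Γ X ι : Type*} [Group Γ] [MulAction Γ X]
    {f : ι → X → ℤ} {γj : ι → Γ} {i : ι} {γ : Γ} {x : X} (hf : f i (γ⁻¹ • x) ≠ 0)
    {n : ℕ} (k : Fin (n + 2)) :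
    Relation.EqvGen (fun x y => ∃ j, f j x ≠ 0 ∧ y = (γj j)⁻¹ • x)
      (γ⁻¹ • x) ((γ * if k = 0 then γj i else 1)⁻¹ • x) := by
  split_ifs
  · rw [mul_inv_rev, mul_smul]
    exact .rel _ _ ⟨i, hf, rfl⟩
  · rw [mul_one]
    exact .refl _

theorem edge_implies_R_equivalent_general
    (n : ℕ)
    (Γ : Type) [Group Γ]
    (Mt : Type) [TopologicalSpace Mt]
    [MulAction Γ Mt] [ContinuousConstSMul Γ Mt]
    (X : Type) [MulAction Γ X]
    -- D is a relatively compact set-theoretic fundamental domain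
    (D : Set Mt)
    (hDfund : ∀ y : Mt, ∃! γ : Γ, y ∈ γ • D)
    -- c = Σ_j f_j ⊗ σ_j is a parametrised fundamental cycle in reduced form
    (m : ℕ) (f : Fin m → X → ℤ) (σ : Fin m → SSimplex (n + 1) Mt)
    (hv0 : ∀ j, σ j (vertex 0) ∈ D)
    (γj : Fin m → Γ) (hγj : ∀ j, σ j (vertex 1) ∈ γj j • D)
    (R : X → X → Prop)
    (hR : R = Relation.EqvGen fun x y => ∃ j, f j x ≠ 0 ∧ y = (γj j)⁻¹ • x)
    (x : X) :
    ∀ γ ℓ : Γ, γ ≠ ℓ →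
      (∃ i j, ∃ k l : Fin (n + 2),
        faceMap k (γ • σ i) = faceMap l (ℓ • σ j) ∧
          f i (γ⁻¹ • x) ≠ 0 ∧ f j (ℓ⁻¹ • x) ≠ 0) →
      R (γ⁻¹ • x) (ℓ⁻¹ • x) := by
  rintro γ ℓ - ⟨i, j, k, l, hface, hfi, hfj⟩
  have hshift : γ * (if k = 0 then γj i else 1) = ℓ * (if l = 0 then γj j else 1) :=
    (hDfund _).unique (faceMap_smul_apply_vertex_zero_mem (hv0 i) (hγj i) γ k)
      (hface ▸ faceMap_smul_apply_vertex_zero_mem (hv0 j) (hγj j) ℓ l)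
  subst hR
  refine (eqvGen_inv_smul_mul_inv_smul hfi k).trans _ _ _ ?_
  rw [hshift]
  exact (eqvGen_inv_smul_mul_inv_smul hfj l).symm

/-- In the setup of the main theorem: whenever `{γ, ℓ}` is an edge of the graph `G_x`
(given by matching faces of the translated simplices, with both coefficient functions
supported at the corresponding points), the points `γ⁻¹·x` and `ℓ⁻¹·x` are
`R`-equivalent. -/
theorem edge_implies_R_equivalent
    (n : ℕ) (M : Type) [TopologicalSpace M] [T2Space M]
    [ChartedSpace (EuclideanSpace ℝ (Fin (n + 1))) M] [CompactSpace M] [ConnectedSpace M]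
    (horient : ∃ w : SSimplex (n + 1) M →₀ ℤ, IsFinFundCycle w)
    (Γ : Type) [Group Γ] [Countable Γ] (hΓ : Infinite Γ)
    (Mt : Type) [TopologicalSpace Mt] [SimplyConnectedSpace Mt]
    [MulAction Γ Mt] [ContinuousConstSMul Γ Mt]
    (p : C(Mt, M)) (hcov : IsCoveringMap ⇑p)
    (hdeck : ∀ (γ : Γ) (y : Mt), p (γ • y) = p y)
    (hfree : ∀ (γ : Γ) (y : Mt), γ • y = y → γ = 1)
    (htrans : ∀ y z : Mt, p y = p z → ∃ γ : Γ, γ • y = z)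
    (X : Type) [MeasurableSpace X] [StandardBorelSpace X]
    (μ : Measure X) [IsProbabilityMeasure μ] [MulAction Γ X]
    (hpres : ∀ γ : Γ, MeasurePreserving (fun x : X => γ • x) μ μ)
    (hessfree : ∀ᵐ x ∂μ, ∀ γ : Γ, γ ≠ 1 → γ • x ≠ x)
    (herg : IsErgodicRel μ fun x y : X => ∃ γ : Γ, y = γ • x)
    -- D is a relatively compact set-theoretic fundamental domain
    (D : Set Mt) (hDcpt : IsCompact (closure D))
    (hDfund : ∀ y : Mt, ∃! γ : Γ, y ∈ γ • D)
    -- c = Σ_j f_j ⊗ σ_j is a parametrised fundamental cycle in reduced form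
    (m : ℕ) (f : Fin m → X → ℤ) (σ : Fin m → SSimplex (n + 1) Mt)
    (c : ParamChain (n + 1) Γ Mt X ℤ) (hcfund : IsParamFundCycle p c)
    (hcoeff : ∀ (j) (γ : Γ) (x), c.coeff (γ • σ j) x = f j (γ⁻¹ • x))
    (hsupp : ∀ τ, c.coeff τ ≠ 0 → ∃ j, ∃ γ : Γ, τ = γ • σ j)
    (hred : ∀ i j (γ : Γ), γ • σ i = σ j → i = j)
    (hv0 : ∀ j, σ j (vertex 0) ∈ D)
    (γj : Fin m → Γ) (hγj : ∀ j, σ j (vertex 1) ∈ γj j • D)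
    (R : X → X → Prop)
    (hR : R = Relation.EqvGen fun x y => ∃ j, f j x ≠ 0 ∧ y = (γj j)⁻¹ • x)
    (x : X) :
    ∀ γ ℓ : Γ, γ ≠ ℓ →
      (∃ i j, ∃ k l : Fin (n + 2),
        faceMap k (γ • σ i) = faceMap l (ℓ • σ j) ∧
          f i (γ⁻¹ • x) ≠ 0 ∧ f j (ℓ⁻¹ • x) ≠ 0) →
      R (γ⁻¹ • x) (ℓ⁻¹ • x) :=
  edge_implies_R_equivalent_general n Γ Mt X D hDfund m f σ hv0 γj hγj R hR x

end Paper
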